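/- The birational transformation s₂ : (q₁, p₁, q₂, p₂; α₁, α₂, α₃) ↦ (q₁, p₁, q₂ + α₃/p₂, p₂; α₁+α₃, α₂, −α₃) leaves both Hamiltonians K₁ and K₂ invariant as rational functions (for p₂ ≠ 0). -/
import Mathlib

/-- K₁ as a function of (q₁,p₁,q₂,p₂) with parameters α₂, α₃. -/
noncomputable def K1f (α₂ α₃ q₁ p₁ q₂ p₂ : ℂ) : ℂ :=
  q₁ ^ 2 * p₁ - p₁ ^ 2 + α₂ * q₁ - q₂ ^ 2 * p₂ / 2 - p₂ ^ 2 / 2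
    - α₃ / 2 * q₂ + 3 / 2 * p₁ * p₂

/-- K₂ as a function of (q₁,p₁,q₂,p₂) with parameters α₁, α₂, α₃. -/
noncomputable def K2f (α₁ α₂ α₃ q₁ p₁ q₂ p₂ : ℂ) : ℂ :=
  -α₃ ^ 2 * p₁ + q₂ ^ 4 * p₂ ^ 2 + 2 * q₂ ^ 2 * p₂ ^ 3 + p₂ ^ 4
    + 2 * α₃ * q₂ ^ 3 * p₂ + 4 * (α₁ + α₃) * q₂ * p₂ ^ 2 + α₃ ^ 2 * q₂ ^ 2
    + α₃ * (2 * α₁ + α₃) * p₂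
    - p₂ * (8 * q₁ * p₁ * q₂ * p₂ + 6 * p₁ * q₂ ^ 2 * p₂ + 4 * q₁ ^ 2 * p₁ * p₂
      + 2 * p₁ * p₂ ^ 2 - p₁ ^ 2 * p₂ + 4 * α₂ * q₁ * p₂ + 4 * α₃ * q₁ * p₁
      + 6 * α₃ * p₁ * q₂)

/-- s₂ : (q₁,p₁,q₂,p₂;α₁,α₂,α₃) ↦ (q₁,p₁,q₂+α₃/p₂,p₂;α₁+α₃,α₂,−α₃)
leaves both K₁ and K₂ invariant (for p₂ ≠ 0). -/
theorem s2_preserves_K1_K2 (α₁ α₂ α₃ q₁ p₁ q₂ p₂ : ℂ)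
    (hrel : 2 * α₁ + 2 * α₂ + α₃ = 0) (hp₂ : p₂ ≠ 0) :
    K1f α₂ (-α₃) q₁ p₁ (q₂ + α₃ / p₂) p₂ = K1f α₂ α₃ q₁ p₁ q₂ p₂ ∧
    K2f (α₁ + α₃) α₂ (-α₃) q₁ p₁ (q₂ + α₃ / p₂) p₂ = K2f α₁ α₂ α₃ q₁ p₁ q₂ p₂ := by
  obtain ⟨u, rfl⟩ : ∃ u, α₃ = u * p₂ := ⟨α₃ / p₂, by field_simp⟩
  have hq : q₂ + u * p₂ / p₂ = q₂ + u := by field_simp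
  rw [hq]
  unfold K1f K2f
  constructor
  · ring
  · ring
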